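/- arXiv:2010.03198 — 6 statements merged into one kernel-verified Lean document; each statement's English description precedes it below -/
import Mathlib

section
/- Let n ≥ 3 and let A be the adjacency matrix of the complete graph K_n (all-ones matrix minus identity), and let H_A(t) = exp(-itA). Then H_A(2π/n) = exp(2πi/n)·I_n. In particular K_n is periodic with period 2π/n. -/
set_option maxHeartbeats 800000


open Kronecker

/-- Adjacency matrix of the complete graph `K_n`, as a complex matrix. -/
noncomputable def Kadj (n : ℕ) : Matrix (Fin n) (Fin n) ℂ :=
  Matrix.of fun i j => if i = j then 0 else 1

/-- Adjacency matrix of `K_2`, indexed by `ZMod 2`. -/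
noncomputable def A2 : Matrix (ZMod 2) (ZMod 2) ℂ :=
  Matrix.of fun i j => if i = j then 0 else 1

/-- Kronecker product of a family of matrices. -/
noncomputable def kronC {d : ℕ} {n : Fin d → ℕ}
    (M : ∀ i, Matrix (Fin (n i)) (Fin (n i)) ℂ) :
    Matrix (∀ i, Fin (n i)) (∀ i, Fin (n i)) ℂ :=
  Matrix.of fun u v => ∏ i, M i (u i) (v i)

/-- `M_a = A_{K_2}^{a_1} ⊗ ⋯ ⊗ A_{K_2}^{a_r}` for `a ∈ (ℤ/2)^r`. -/
noncomputable def cube {r : ℕ} (a : Fin r → ZMod 2) :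
    Matrix (Fin r → ZMod 2) (Fin r → ZMod 2) ℂ :=
  Matrix.of fun u v => ∏ j, (if a j = 1 then A2 else 1) (u j) (v j)

/-- `A_{K_{n_1}}^{a_1} ⊗ ⋯ ⊗ A_{K_{n_d}}^{a_d}`. -/
noncomputable def compKron {d : ℕ} (n : Fin d → ℕ) (a : Fin d → ZMod 2) :
    Matrix (∀ i, Fin (n i)) (∀ i, Fin (n i)) ℂ :=
  kronC fun i => if a i = 1 then Kadj (n i) else 1

/-- Hamming weight. -/
def wt {m : ℕ} (a : Fin m → ZMod 2) : ℕ :=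
  (Finset.univ.filter fun i => a i = 1).card

lemma exp_smul_idem {𝔸 : Type*} [NormedRing 𝔸] [NormedAlgebra ℂ 𝔸] [CompleteSpace 𝔸]
    (p : 𝔸) (hp : p * p = p) (a : ℂ) :
    NormedSpace.exp (a • p) = 1 + (Complex.exp a - 1) • p := by
  have hpow : ∀ k : ℕ, (a • p) ^ (k + 1) = a ^ (k + 1) • p := by
    intro k
    induction k with
    | zero => simp
    | succ k ih =>
      rw [pow_succ, ih, smul_mul_assoc, mul_smul_comm, hp, smul_smul, ← pow_succ]
  have hsum : Summable fun k : ℕ => (((k+1).factorial : ℂ))⁻¹ * a ^ (k + 1) := by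
    have := (NormedSpace.exp_series_hasSum_exp' (𝕂 := ℂ) a).summable
    have h2 : Summable fun k : ℕ => ((k.factorial : ℂ))⁻¹ * a ^ k := by
      simpa [smul_eq_mul] using this
    exact (summable_nat_add_iff (f := fun k : ℕ => ((k.factorial : ℂ))⁻¹ * a ^ k) 1).2 h2
  simp only [NormedSpace.exp_eq_tsum ℂ]
  rw [Summable.tsum_eq_zero_add (NormedSpace.exp_series_hasSum_exp' (𝕂 := ℂ) (a • p)).summable]
  have h0 : (((0).factorial : ℂ))⁻¹ • (a • p) ^ 0 = (1 : 𝔸) := by simp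
  rw [h0]
  congr 1
  have : (fun k : ℕ => (((k+1).factorial : ℂ))⁻¹ • (a • p) ^ (k + 1))
      = fun k : ℕ => ((((k+1).factorial : ℂ))⁻¹ * a ^ (k + 1)) • p := by
    funext k; rw [hpow, smul_smul]
  rw [this, Summable.tsum_smul_const hsum]
  congr 1
  have hexp : Complex.exp a = 1 + ∑' k : ℕ, (((k+1).factorial : ℂ))⁻¹ * a ^ (k + 1) := by
    rw [Complex.exp_eq_exp_ℂ]
    simp only [NormedSpace.exp_eq_tsum ℂ]
    rw [Summable.tsum_eq_zero_add (NormedSpace.exp_series_hasSum_exp' (𝕂 := ℂ) a).summable]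
    simp [smul_eq_mul]
  rw [hexp]; ring

lemma matrix_exp_smul_idem {n : ℕ} (p : Matrix (Fin n) (Fin n) ℂ) (hp : p * p = p) (a : ℂ) :
    NormedSpace.exp (a • p) = 1 + (Complex.exp a - 1) • p := by
  letI : NormedRing (Matrix (Fin n) (Fin n) ℂ) := Matrix.linftyOpNormedRing
  letI : NormedAlgebra ℂ (Matrix (Fin n) (Fin n) ℂ) := Matrix.linftyOpNormedAlgebra
  exact exp_smul_idem p hp a

lemma expKadj (n : ℕ) (hn : 0 < n) (c : ℂ) (h : Complex.exp (c * n) = 1) :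
    NormedSpace.exp (c • Kadj n) = Complex.exp (-c) • (1 : Matrix (Fin n) (Fin n) ℂ) := by
  have hn' : (n : ℂ) ≠ 0 := Nat.cast_ne_zero.2 hn.ne'
  set J : Matrix (Fin n) (Fin n) ℂ := Matrix.of fun _ _ => 1 with hJdef
  have hK : c • Kadj n = c • J + (-c) • 1 := by
    ext i j
    by_cases hij : i = j <;>
      simp [Kadj, hJdef, Matrix.one_apply, hij]
  have hJJ : J * J = (n : ℂ) • J := by
    ext i j
    simp [Matrix.mul_apply, hJdef]
  set P : Matrix (Fin n) (Fin n) ℂ := ((n : ℂ))⁻¹ • J with hPdef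
  have hP : P * P = P := by
    rw [hPdef, smul_mul_assoc, mul_smul_comm, hJJ, smul_smul, smul_smul]
    congr 1
    field_simp
  have hcJ : c • J = (c * n) • P := by
    rw [hPdef, smul_smul]
    congr 1
    field_simp
  have comm : Commute (c • J) ((-c) • (1 : Matrix (Fin n) (Fin n) ℂ)) :=
    ((Commute.one_right (c • J)).smul_right (-c))
  rw [hK, Matrix.exp_add_of_commute _ _ comm, hcJ, matrix_exp_smul_idem P hP _, h,
    matrix_exp_smul_idem (1 : Matrix (Fin n) (Fin n) ℂ) (one_mul 1) (-c)]
  simp [smul_smul, add_smul, sub_smul]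

/-- `K_n` (`n ≥ 3`) satisfies `H_A(2π/n) = exp(2πi/n)·I`, and for every
integer `z` the matrix `H_A(2zπ/n)` is a unimodular multiple of the identity
(periodicity with period `2π/n`). -/
theorem stmt2 (n : ℕ) (hn : 3 ≤ n) :
    NormedSpace.exp ((-Complex.I * ((2 * Real.pi / n : ℝ) : ℂ)) • Kadj n) =
      Complex.exp (2 * Real.pi * Complex.I / n) • (1 : Matrix (Fin n) (Fin n) ℂ) ∧
    ∀ z : ℤ, ∃ γ : ℂ, ‖γ‖ = 1 ∧
      NormedSpace.exp ((-Complex.I * ((2 * z * Real.pi / n : ℝ) : ℂ)) • Kadj n) =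
        γ • (1 : Matrix (Fin n) (Fin n) ℂ) := by
  have hn0 : 0 < n := by omega
  have hn' : (n : ℂ) ≠ 0 := Nat.cast_ne_zero.2 hn0.ne'
  constructor
  · have he : Complex.exp ((-Complex.I * ((2 * Real.pi / n : ℝ) : ℂ)) * n) = 1 := by
      have harg : (-Complex.I * ((2 * Real.pi / n : ℝ) : ℂ)) * n
          = ((-1 : ℤ) : ℂ) * (2 * Real.pi * Complex.I) := by
        push_cast
        field_simp
      rw [harg, Complex.exp_int_mul_two_pi_mul_I (-1)]
    rw [expKadj n hn0 _ he]
    congr 1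
    push_cast
    ring
  · intro z
    refine ⟨Complex.exp (Complex.I * ((2 * z * Real.pi / n : ℝ) : ℂ)), ?_, ?_⟩
    · simp [Complex.norm_exp]
    · have he : Complex.exp ((-Complex.I * ((2 * z * Real.pi / n : ℝ) : ℂ)) * n) = 1 := by
        have harg : (-Complex.I * ((2 * z * Real.pi / n : ℝ) : ℂ)) * n
            = ((-z : ℤ) : ℂ) * (2 * Real.pi * Complex.I) := by
          push_cast
          field_simp
        rw [harg, Complex.exp_int_mul_two_pi_mul_I (-z)]
      rw [expKadj n hn0 _ he]
      congr 1
      ring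
end

section
/- The complete graph K_n (n ≥ 3) does not exhibit perfect state transfer: for all t ∈ ℝ and all distinct vertices u ≠ v, |H_{A}(t)_{u,v}| < 1, where A = J_n - I_n is the adjacency matrix of K_n. -/
/-! The adjacency matrix of `K_n` is `J - 1 = (n - 1) • P - (1 - P)`, where `P = J / n` is the
orthogonal projection onto the constant vectors. As `P` and `1 - P` are orthogonal idempotents
summing to `1`, `exp (c • A) = exp ((n - 1) c) • P + exp (-c) • (1 - P)`, whose off-diagonal entries
are `(exp ((n - 1) c) - exp (-c)) / n`. For `c = -i t` both exponentials have modulus one, so these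
entries have modulus at most `2 / n < 1`. -/

open Kronecker

open NormedSpace

namespace IsIdempotentElem

section Algebra

variable {𝕂 𝔸 : Type*} [CommRing 𝕂] [Ring 𝔸] [Algebra 𝕂 𝔸] {p : 𝔸}

def prodAlgHom (hp : IsIdempotentElem p) : 𝕂 × 𝕂 →ₐ[𝕂] 𝔸 :=
  AlgHom.ofLinearMap ((LinearMap.fst 𝕂 𝕂 𝕂).smulRight p + (LinearMap.snd 𝕂 𝕂 𝕂).smulRight (1 - p))
    (by simp) fun x y => by
      have hq : (1 - p) * (1 - p) = 1 - p := hp.one_sub.eq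
      simp only [LinearMap.add_apply, LinearMap.smulRight_apply, LinearMap.fst_apply,
        LinearMap.snd_apply, Prod.fst_mul, Prod.snd_mul, add_mul, mul_add, smul_mul_smul,
        hp.eq, hq, mul_sub, sub_mul, mul_one, one_mul, sub_self, smul_zero, add_zero, zero_add]

@[simp]
theorem prodAlgHom_apply (hp : IsIdempotentElem p) (z : 𝕂 × 𝕂) :
    hp.prodAlgHom z = z.1 • p + z.2 • (1 - p) :=
  rfl

end Algebra

theorem exp_smul_add_smul_one_sub {𝕂 𝔸 : Type*} [NormedField 𝕂] [NormedAlgebra ℚ 𝕂]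
    [CompleteSpace 𝕂] [NormedRing 𝔸] [NormedAlgebra 𝕂 𝔸] [Algebra ℚ 𝔸] {p : 𝔸}
    (hp : IsIdempotentElem p) (a b : 𝕂) :
    exp (a • p + b • (1 - p)) = exp a • p + exp b • (1 - p) := by
  have hcont : Continuous (hp.prodAlgHom (𝕂 := 𝕂)) := by
    change Continuous fun z : 𝕂 × 𝕂 => z.1 • p + z.2 • (1 - p)
    fun_prop
  simpa using (map_exp (hp.prodAlgHom (𝕂 := 𝕂)) hcont (a, b)).symm

end IsIdempotentElem

namespace Matrix

variable (ι R : Type*) [Fintype ι] [DivisionRing R]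

def averaging : Matrix ι ι R :=
  (Fintype.card ι : R)⁻¹ • of fun _ _ => 1

variable {ι R}

@[simp]
theorem averaging_apply (i j : ι) : averaging ι R i j = (Fintype.card ι : R)⁻¹ := by
  simp [averaging]

theorem isIdempotentElem_averaging : IsIdempotentElem (averaging ι R) := by
  ext i j
  by_cases h : (Fintype.card ι : R) = 0 <;> simp [mul_apply, h]

end Matrix

open Matrix

theorem smul_Kadj (n : ℕ) (c : ℂ) :
    c • Kadj n = (((n : ℂ) - 1) * c) • averaging (Fin n) ℂ + (-c) • (1 - averaging (Fin n) ℂ) := by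
  ext i j
  have hn : (n : ℂ) ≠ 0 := Nat.cast_ne_zero.mpr (Fin.pos i).ne'
  by_cases h : i = j <;> simp [Kadj, one_apply, h] <;> field_simp <;> ring

open scoped Norms.Operator in
theorem exp_smul_Kadj_apply_of_ne {n : ℕ} (c : ℂ) {u v : Fin n} (huv : u ≠ v) :
    exp (c • Kadj n) u v = (Complex.exp (((n : ℂ) - 1) * c) - Complex.exp (-c)) / n := by
  rw [smul_Kadj]
  have hexp := (isIdempotentElem_averaging (ι := Fin n) (R := ℂ)).exp_smul_add_smul_one_sub
    (((n : ℂ) - 1) * c) (-c)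
  -- `hexp` is stated for the operator-norm ring structure, which `rw` does not identify with
  -- `Matrix.instRing`; comparing entries goes through by defeq.
  refine (congrFun₂ hexp u v).trans ?_
  simp [one_apply, huv, ← Complex.exp_eq_exp_ℂ]
  ring

/-- the complete graph `K_n` (`n ≥ 3`) has no perfect state transfer. -/
theorem stmt3 (n : ℕ) (hn : 3 ≤ n) (t : ℝ) (u v : Fin n) (huv : u ≠ v) :
    ‖(NormedSpace.exp ((-Complex.I * (t : ℂ)) • Kadj n)) u v‖ < 1 := by
  have hn' : (3 : ℝ) ≤ n := by exact_mod_cast hn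
  have hnum : ‖Complex.exp (((n : ℂ) - 1) * (-Complex.I * t)) - Complex.exp (-(-Complex.I * t))‖
      ≤ 2 := by
    refine (norm_sub_le _ _).trans_eq ?_
    simp [Complex.norm_exp]
    norm_num
  rw [exp_smul_Kadj_apply_of_ne _ huv, norm_div, Complex.norm_natCast,
    div_lt_one (by positivity)]
  linarith
end

section
/- Let G and H be graphs with adjacency matrices A_G and A_H, and let A_H = Σ_s μ_s F_s be the spectral decomposition of A_H (μ_s the distinct eigenvalues, F_s the orthogonal projections onto the eigenspaces with Σ_s F_s = I). Then the transition matrix of the tensor product G ⊗ H satisfies exp(-it(A_G ⊗ A_H)) = Σ_s exp(-i μ_s t A_G) ⊗ F_s. -/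
/-!
If `P_s` is a complete family of orthogonal idempotents, then `(B_s)_s ↦ ∑_s B_s ⊗ P_s` is a
continuous unital algebra homomorphism from the product algebra `∏_s Mₙ` to `Mₙₘ`, so it commutes
with `exp`; and `exp` on a product algebra acts componentwise. By the spectral decomposition,
`-it (A_G ⊗ A_H)` is the image of the family `(-i μ_s t A_G)_s`.
-/

open Kronecker

open NormedSpace

namespace Matrix

theorem kronecker_sum {ι l m n p R : Type*} [NonUnitalNonAssocSemiring R] (A : Matrix l m R)
    (s : Finset ι) (B : ι → Matrix n p R) :
    A ⊗ₖ ∑ i ∈ s, B i = ∑ i ∈ s, A ⊗ₖ B i := by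
  ext
  simp [Finset.mul_sum, sum_apply]

theorem continuous_kronecker_right {l m n p R : Type*} [TopologicalSpace R] [Mul R]
    [ContinuousMul R] (P : Matrix n p R) :
    Continuous fun B : Matrix l m R => B ⊗ₖ P :=
  continuous_pi fun _ => continuous_pi fun _ =>
    (continuous_id.matrix_elem _ _).mul continuous_const

variable {ι n m R : Type*} [Fintype ι] [Fintype n] [DecidableEq n] [Fintype m] [DecidableEq m]

def sumKroneckerAlgHom [CommRing R] {P : ι → Matrix m m R}
    (hP : CompleteOrthogonalIdempotents P) :
    (ι → Matrix n n R) →ₐ[R] Matrix (n × m) (n × m) R :=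
  AlgHom.ofLinearMap
    { toFun := fun B => ∑ s, B s ⊗ₖ P s
      map_add' := fun B C => by
        simp only [Pi.add_apply, add_kronecker, Finset.sum_add_distrib]
      map_smul' := fun r B => by
        simp only [Pi.smul_apply, smul_kronecker, Finset.smul_sum, RingHom.id_apply] }
    (by
      simp only [LinearMap.coe_mk, AddHom.coe_mk, Pi.one_apply, ← kronecker_sum, hP.complete,
        one_kronecker_one])
    (fun B C => by
      classical
      simp only [LinearMap.coe_mk, AddHom.coe_mk, Pi.mul_apply, Finset.sum_mul_sum,
        ← mul_kronecker_mul, hP.mul_eq]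
      simp [apply_ite])

theorem sumKroneckerAlgHom_apply [CommRing R] {P : ι → Matrix m m R}
    (hP : CompleteOrthogonalIdempotents P) (B : ι → Matrix n n R) :
    sumKroneckerAlgHom hP B = ∑ s, B s ⊗ₖ P s :=
  rfl

theorem continuous_sumKroneckerAlgHom [CommRing R] [TopologicalSpace R] [IsTopologicalRing R]
    {P : ι → Matrix m m R} (hP : CompleteOrthogonalIdempotents P) :
    Continuous (sumKroneckerAlgHom (n := n) hP) :=
  continuous_finsetSum _ fun s _ => (continuous_kronecker_right (P s)).comp (continuous_apply s)

theorem exp_sum_kronecker [RCLike R] {P : ι → Matrix m m R}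
    (hP : CompleteOrthogonalIdempotents P) (B : ι → Matrix n n R) :
    exp (∑ s, B s ⊗ₖ P s) = ∑ s, exp (B s) ⊗ₖ P s := by
  open scoped Norms.Operator in
  have hmap := (map_exp _ (continuous_sumKroneckerAlgHom hP) B).symm
  rw [sumKroneckerAlgHom_apply, sumKroneckerAlgHom_apply] at hmap
  -- `exact` rather than `rw`: the operator-norm topology agrees with the default one only up to
  -- unfolding instances.
  exact hmap.trans (Finset.sum_congr rfl fun s _ =>
    congrArg (· ⊗ₖ P s) (map_exp (Pi.evalRingHom _ s) (continuous_apply s) B))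

end Matrix

theorem stmt7_general (nG mH k : ℕ) (AG : Matrix (Fin nG) (Fin nG) ℝ)
    (AH : Matrix (Fin mH) (Fin mH) ℝ)
    (μ : Fin k → ℝ)
    (F : Fin k → Matrix (Fin mH) (Fin mH) ℝ)
    (hdecomp : AH = ∑ s, μ s • F s)
    (hidem : ∀ s, F s * F s = F s)
    (horth : ∀ s s', s ≠ s' → F s * F s' = 0)
    (hsum : ∑ s, F s = 1) (t : ℝ) :
    NormedSpace.exp ((-Complex.I * (t : ℂ)) •
        ((AG.map Complex.ofReal) ⊗ₖ (AH.map Complex.ofReal))) =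
      ∑ s, (NormedSpace.exp ((-Complex.I * ((μ s : ℂ)) * (t : ℂ)) •
        AG.map Complex.ofReal)) ⊗ₖ ((F s).map Complex.ofReal) := by
  have hF : CompleteOrthogonalIdempotents F := ⟨⟨hidem, fun s s' h => horth s s' h⟩, hsum⟩
  have hP : CompleteOrthogonalIdempotents fun s => (F s).map Complex.ofReal :=
    hF.map (Complex.ofRealHom.mapMatrix (m := Fin mH))
  have hAH : AH.map Complex.ofReal = ∑ s, (μ s : ℂ) • (F s).map Complex.ofReal := by
    ext i j
    simp [hdecomp, Matrix.sum_apply]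
  rw [← Matrix.exp_sum_kronecker hP, hAH, Matrix.kronecker_sum, Finset.smul_sum]
  refine congrArg _ (Finset.sum_congr rfl fun s _ => ?_)
  rw [Matrix.kronecker_smul, smul_smul, Matrix.smul_kronecker, mul_right_comm]

/-- if `A_H = Σ_s μ_s F_s` is the spectral decomposition of `A_H`, then
`exp(-it(A_G ⊗ A_H)) = Σ_s exp(-i μ_s t A_G) ⊗ F_s`. -/
theorem stmt7 (nG mH k : ℕ) (AG : Matrix (Fin nG) (Fin nG) ℝ)
    (AH : Matrix (Fin mH) (Fin mH) ℝ) (hG : AG.IsSymm) (hH : AH.IsSymm)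
    (μ : Fin k → ℝ) (hμ : Function.Injective μ)
    (F : Fin k → Matrix (Fin mH) (Fin mH) ℝ)
    (hdecomp : AH = ∑ s, μ s • F s)
    (hsymm : ∀ s, (F s).IsSymm)
    (hidem : ∀ s, F s * F s = F s)
    (horth : ∀ s s', s ≠ s' → F s * F s' = 0)
    (hsum : ∑ s, F s = 1) (t : ℝ) :
    NormedSpace.exp ((-Complex.I * (t : ℂ)) •
        ((AG.map Complex.ofReal) ⊗ₖ (AH.map Complex.ofReal))) =
      ∑ s, (NormedSpace.exp ((-Complex.I * ((μ s : ℂ)) * (t : ℂ)) •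
        AG.map Complex.ofReal)) ⊗ₖ ((F s).map Complex.ofReal) :=
  stmt7_general nG mH k AG AH μ F hdecomp hidem horth hsum t
end

section
/- Let a = (a_1,…,a_d) ∈ (ℤ/2)^d be nonzero, n_1,…,n_d ≥ 3 integers, and h = gcd(n_1,…,n_d). Let B_a = A_{K_{n_1}}^{a_1} ⊗ ⋯ ⊗ A_{K_{n_d}}^{a_d} be the adjacency matrix of NEPS(K_{n_1},…,K_{n_d}; {a}). Then for every nonzero integer t, exp(-i(2tπ/h) B_a) = exp((-1)^{w(a)-1} (2tπ/h) i) · I, where w(a) is the Hamming weight of a. In particular this NEPS is periodic with period 2π/h. -/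
open Kronecker

/-!
`K_n` is Hermitian with `K_n² = (n - 2) K_n + (n - 1)`, so it is unitarily diagonalizable with
eigenvalues in `{-1, n - 1}`, all `≡ -1 (mod n)`. Conjugating each Kronecker factor to a diagonal
matrix conjugates `B_a` to the diagonal matrix of products of factor eigenvalues, each
`≡ (-1)^{w(a)} (mod h)`. Since `exp(-2πi t m / h)` only depends on `m mod h`, the exponential of
that diagonal matrix is a scalar.
-/

open Matrix

theorem Matrix.IsHermitian.eigenvalues_sq_eq {ι : Type*} [Fintype ι] [DecidableEq ι]
    {A : Matrix ι ι ℂ} (hA : A.IsHermitian) {b c : ℂ} (hsq : A * A = b • A + c • 1) (j : ι) :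
    (hA.eigenvalues j : ℂ) ^ 2 = b * hA.eigenvalues j + c := by
  set v : ι → ℂ := ⇑(hA.eigenvectorBasis j)
  have hv : A *ᵥ v = (hA.eigenvalues j : ℂ) • v := by
    rw [hA.mulVec_eigenvectorBasis, RCLike.real_smul_eq_coe_smul (K := ℂ)]; rfl
  have hv0 : v ≠ 0 := fun h => hA.eigenvectorBasis.orthonormal.ne_zero j (by
    ext i; exact congrFun h i)
  apply smul_left_injective ℂ hv0
  have := congrArg (· *ᵥ v) hsq
  simp only [← mulVec_mulVec, hv, mulVec_smul, add_mulVec, smul_mulVec, one_mulVec] at this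
  simp only [sq, mul_smul, add_smul, this]

theorem Kadj_isHermitian (n : ℕ) : (Kadj n).IsHermitian := by
  ext i j
  simp [Kadj, eq_comm]

theorem Kadj_mul_self (n : ℕ) :
    Kadj n * Kadj n = ((n : ℂ) - 2) • Kadj n + ((n : ℂ) - 1) • 1 := by
  have hJ : Kadj n = of (fun _ _ => 1) - 1 := by
    ext i j; by_cases h : i = j <;> simp [Kadj, one_apply, h]
  have hJJ : (of (fun _ _ => 1) : Matrix (Fin n) (Fin n) ℂ) * of (fun _ _ => 1) =
      (n : ℂ) • of (fun _ _ => 1) := by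
    ext i j; simp [mul_apply]
  simp only [hJ, sub_mul, mul_sub, hJJ, mul_one, one_mul]
  module

theorem Kadj_eigenvalues_eq_neg_one_or (n : ℕ) (j : Fin n) :
    (Kadj_isHermitian n).eigenvalues j = -1 ∨ (Kadj_isHermitian n).eigenvalues j = n - 1 := by
  set e := (Kadj_isHermitian n).eigenvalues j
  have hsq : e ^ 2 = (n - 2) * e + (n - 1) := by
    exact_mod_cast (Kadj_isHermitian n).eigenvalues_sq_eq (Kadj_mul_self n) j
  rcases mul_eq_zero.mp (by linear_combination hsq : (e + 1) * (e - (n - 1)) = 0) with h | h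
  · exact .inl (by linarith)
  · exact .inr (by linarith)

theorem exists_Kadj_eq_units_conj_diagonal (n : ℕ) :
    ∃ (U : (Matrix (Fin n) (Fin n) ℂ)ˣ) (z : Fin n → ℤ),
      Kadj n = U.val * diagonal (fun k => (z k : ℂ)) * U⁻¹.val ∧
        ∀ k, z k ≡ -1 [ZMOD n] := by
  have hA := Kadj_isHermitian n
  refine ⟨Unitary.toUnits hA.eigenvectorUnitary,
    fun k => if hA.eigenvalues k = -1 then -1 else n - 1, ?_, fun k => ?_⟩
  · have hdiag : (RCLike.ofReal ∘ hA.eigenvalues : Fin n → ℂ) =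
        fun k => ((if hA.eigenvalues k = -1 then -1 else n - 1 : ℤ) : ℂ) := by
      funext k
      rcases Kadj_eigenvalues_eq_neg_one_or n k with h | h <;> simp [h]
    conv_lhs => rw [hA.spectral_theorem, Unitary.conjStarAlgAut_apply, hdiag]
    rfl
  · dsimp only
    split_ifs
    · rfl
    · simp [Int.ModEq]

section Kronecker

variable {d : ℕ} {n : Fin d → ℕ}

theorem kronC_mul (X Y : ∀ i, Matrix (Fin (n i)) (Fin (n i)) ℂ) :
    kronC (X * Y) = kronC X * kronC Y := by
  ext u v
  simp only [kronC, of_apply, Pi.mul_apply, mul_apply, Fintype.prod_sum]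
  exact Finset.sum_congr rfl fun w _ => Finset.prod_mul_distrib

theorem kronC_diagonal (f : ∀ i, Fin (n i) → ℂ) :
    kronC (fun i => diagonal (f i)) = diagonal fun u => ∏ i, f i (u i) := by
  ext u v
  by_cases huv : u = v
  · simp [kronC, huv]
  · obtain ⟨i, hi⟩ := Function.ne_iff.mp huv
    rw [diagonal_apply_ne _ huv]
    exact Finset.prod_eq_zero (Finset.mem_univ i) (diagonal_apply_ne _ hi)

theorem kronC_one : kronC (1 : ∀ i, Matrix (Fin (n i)) (Fin (n i)) ℂ) = 1 := by
  simpa [← Pi.one_def] using kronC_diagonal fun i (_ : Fin (n i)) => (1 : ℂ)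

noncomputable def kronCHom :
    (∀ i, Matrix (Fin (n i)) (Fin (n i)) ℂ) →* Matrix (∀ i, Fin (n i)) (∀ i, Fin (n i)) ℂ where
  toFun := kronC
  map_one' := kronC_one
  map_mul' := kronC_mul

theorem exists_kronC_units_conj (U : ∀ i, (Matrix (Fin (n i)) (Fin (n i)) ℂ)ˣ)
    (D : ∀ i, Matrix (Fin (n i)) (Fin (n i)) ℂ) :
    ∃ W : (Matrix (∀ i, Fin (n i)) (∀ i, Fin (n i)) ℂ)ˣ,
      kronC (fun i => (U i).val * D i * (U i)⁻¹.val) = W.val * kronC D * W⁻¹.val := by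
  let V := MulEquiv.piUnits.symm U
  refine ⟨Units.map kronCHom V, ?_⟩
  change kronCHom (V.val * D * V⁻¹.val) = _
  simp [map_mul, kronCHom]

end Kronecker

theorem Matrix.exp_smul_units_conj_diagonal {ι : Type*} [Fintype ι] [DecidableEq ι]
    (U : (Matrix ι ι ℂ)ˣ) (f : ι → ℂ) {c w : ℂ} (hf : ∀ k, Complex.exp (c * f k) = w) :
    NormedSpace.exp (c • (U.val * diagonal f * U⁻¹.val)) = w • 1 := by
  have hexp : NormedSpace.exp (c • f) = fun _ => w := by
    funext k
    rw [Pi.exp_def, ← Complex.exp_eq_exp_ℂ]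
    exact hf k
  rw [← smul_mul_assoc, ← mul_smul_comm, ← diagonal_smul, Matrix.exp_units_conj, exp_diagonal,
    hexp, ← smul_one_eq_diagonal, mul_smul_comm, mul_one, smul_mul_assoc, Units.mul_inv]

theorem Complex.exp_two_pi_div_mul_eq_of_modEq (t : ℤ) {h : ℕ} {x y : ℤ} (hxy : x ≡ y [ZMOD h]) :
    Complex.exp (-Complex.I * ((2 * t * Real.pi / h : ℝ) : ℂ) * x) =
      Complex.exp (-Complex.I * ((2 * t * Real.pi / h : ℝ) : ℂ) * y) := by
  rcases eq_or_ne h 0 with rfl | hh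
  · simp -- division by `0` is `0`, so both exponents vanish
  obtain ⟨m, hm⟩ := hxy.symm.dvd
  rw [Complex.exp_eq_exp_iff_exists_int]
  refine ⟨-(t * m), ?_⟩
  rw [show (x : ℂ) = y + h * m by exact_mod_cast (by linarith : x = y + h * m)]
  push_cast
  field_simp
  ring

theorem prod_ite_eq_pow_wt {M : Type*} [CommMonoid M] {d : ℕ} (a : Fin d → ZMod 2) (x : M) :
    ∏ i, (if a i = 1 then x else 1) = x ^ wt a := by
  rw [Finset.prod_ite, Finset.prod_const_one, mul_one, Finset.prod_const]
  rfl

theorem wt_pos {d : ℕ} {a : Fin d → ZMod 2} (ha : a ≠ 0) : 0 < wt a := by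
  obtain ⟨i, hi⟩ := Function.ne_iff.mp ha
  have hi1 : a i = 1 := (by decide : ∀ x : ZMod 2, x ≠ 0 → x = 1) _ hi
  exact Finset.card_pos.mpr ⟨i, Finset.mem_filter.mpr ⟨Finset.mem_univ i, hi1⟩⟩

theorem exists_compKron_eq_units_conj_diagonal {d : ℕ} (n : Fin d → ℕ) (a : Fin d → ZMod 2) :
    ∃ (W : (Matrix (∀ i, Fin (n i)) (∀ i, Fin (n i)) ℂ)ˣ) (Z : (∀ i, Fin (n i)) → ℤ),
      compKron n a = W.val * diagonal (fun u => (Z u : ℂ)) * W⁻¹.val ∧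
        ∀ u, Z u ≡ (-1) ^ wt a [ZMOD (Finset.univ.gcd n : ℕ)] := by
  have hfactor : ∀ i, ∃ (U : (Matrix (Fin (n i)) (Fin (n i)) ℂ)ˣ) (z : Fin (n i) → ℤ),
      (if a i = 1 then Kadj (n i) else 1) = U.val * diagonal (fun k => (z k : ℂ)) * U⁻¹.val ∧
        ∀ k, z k ≡ (if a i = 1 then -1 else 1) [ZMOD (Finset.univ.gcd n : ℕ)] := by
    intro i
    split_ifs
    · obtain ⟨U, z, hK, hz⟩ := exists_Kadj_eq_units_conj_diagonal (n i)
      have hdvd : ((Finset.univ.gcd n : ℕ) : ℤ) ∣ n i :=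
        Int.natCast_dvd_natCast.mpr (Finset.gcd_dvd (Finset.mem_univ i))
      exact ⟨U, z, hK, fun k => (hz k).of_dvd hdvd⟩
    · exact ⟨1, fun _ => 1, by simp, fun _ => rfl⟩
  choose U z hUz hz using hfactor
  obtain ⟨W, hW⟩ := exists_kronC_units_conj U fun i => diagonal fun k => (z i k : ℂ)
  refine ⟨W, fun u => ∏ i, z i (u i), ?_, fun u => ?_⟩
  · rw [compKron, funext hUz, hW, kronC_diagonal]
    push_cast
    rfl
  · rw [← prod_ite_eq_pow_wt]
    exact Int.ModEq.prod fun i _ => hz i (u i)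

theorem stmt8_general (d : ℕ) (n : Fin d → ℕ)
    (a : Fin d → ZMod 2) (ha : a ≠ 0) (t : ℤ) :
    NormedSpace.exp
        ((-Complex.I * ((2 * (t : ℝ) * Real.pi / ((Finset.univ.gcd n : ℕ) : ℝ) : ℝ) : ℂ)) •
          compKron n a) =
      Complex.exp ((-1 : ℂ) ^ (wt a - 1) *
          ((2 * (t : ℝ) * Real.pi / ((Finset.univ.gcd n : ℕ) : ℝ) : ℝ) : ℂ) * Complex.I) •
        (1 : Matrix (∀ i, Fin (n i)) (∀ i, Fin (n i)) ℂ) := by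
  obtain ⟨W, Z, hB, hZ⟩ := exists_compKron_eq_units_conj_diagonal n a
  rw [hB, Matrix.exp_smul_units_conj_diagonal W _ fun u =>
    Complex.exp_two_pi_div_mul_eq_of_modEq t (hZ u)]
  obtain ⟨k, hk⟩ := Nat.exists_eq_add_one_of_ne_zero (wt_pos ha).ne'
  rw [hk, Nat.add_sub_cancel]
  push_cast
  ring_nf

/-- for nonzero `a ∈ (ℤ/2)^d`, `n_i ≥ 3`, `h = gcd(n_1,…,n_d)` and every
nonzero integer `t`, `exp(-i(2tπ/h) B_a) = exp((-1)^{w(a)-1}(2tπ/h)i)·I`. -/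
theorem stmt8 (d : ℕ) (hd : 0 < d) (n : Fin d → ℕ) (hn : ∀ i, 3 ≤ n i)
    (a : Fin d → ZMod 2) (ha : a ≠ 0) (t : ℤ) (ht : t ≠ 0) :
    NormedSpace.exp
        ((-Complex.I * ((2 * (t : ℝ) * Real.pi / ((Finset.univ.gcd n : ℕ) : ℝ) : ℝ) : ℂ)) •
          compKron n a) =
      Complex.exp ((-1 : ℂ) ^ (wt a - 1) *
          ((2 * (t : ℝ) * Real.pi / ((Finset.univ.gcd n : ℕ) : ℝ) : ℝ) : ℂ) * Complex.I) •
        (1 : Matrix (∀ i, Fin (n i)) (∀ i, Fin (n i)) ℂ) :=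
  stmt8_general d n a ha t
end

section
/- Let a ∈ (ℤ/2)^d be nonzero, y ∈ (ℤ/2)^r nonzero, n_1,…,n_d ≥ 3 with h = gcd(n_1,…,n_d) even. Let B = (A_{K_{n_1}}^{a_1} ⊗ ⋯ ⊗ A_{K_{n_d}}^{a_d}) ⊗ (A_{K_2}^{y_1} ⊗ ⋯ ⊗ A_{K_2}^{y_r}). Then exp(-πi·B) = -I. -/
open Kronecker

/-!
`K_N = J - I` is Hermitian and satisfies `(K_N + 1)(K_N - (N - 1)) = 0`, so it is unitarily
diagonalizable with eigenvalues in `{-1, N - 1}`; for even `N` both are odd integers (this covers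
`K_2` too). Being conjugate to a diagonal matrix with odd integer entries is preserved by Kronecker
products, since the diagonal entries multiply, and `exp(-πi m) = -1` for odd `m`; hence
`exp(-πi B) = -I`.
-/

open Matrix SimpleGraph

section PiKronecker

variable {R ι : Type*} [CommSemiring R] [Fintype ι] {l m n : ι → Type*}

def Matrix.piKronecker (M : ∀ i, Matrix (m i) (n i) R) : Matrix (∀ i, m i) (∀ i, n i) R :=
  of fun u v => ∏ i, M i (u i) (v i)

theorem Matrix.piKronecker_mul [DecidableEq ι] [∀ i, Fintype (m i)]
    (M : ∀ i, Matrix (l i) (m i) R) (N : ∀ i, Matrix (m i) (n i) R) :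
    piKronecker M * piKronecker N = piKronecker fun i => M i * N i := by
  ext u v
  simp only [piKronecker, mul_apply, of_apply]
  rw [Fintype.prod_sum (f := fun i x => M i (u i) x * N i x (v i))]
  exact Finset.sum_congr rfl fun w _ => Finset.prod_mul_distrib.symm

theorem Matrix.piKronecker_diagonal [∀ i, DecidableEq (m i)] (f : ∀ i, m i → R) :
    piKronecker (fun i => diagonal (f i)) = diagonal fun u => ∏ i, f i (u i) := by
  ext u v
  by_cases huv : u = v
  · simp [piKronecker, huv]
  · obtain ⟨i, hi⟩ := Function.ne_iff.mp huv
    rw [diagonal_apply_ne _ huv]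
    exact Finset.prod_eq_zero (Finset.mem_univ i) (diagonal_apply_ne _ hi)

theorem Matrix.piKronecker_one [∀ i, DecidableEq (m i)] :
    piKronecker (fun i => (1 : Matrix (m i) (m i) R)) = 1 := by
  simpa only [diagonal_one, Finset.prod_const_one] using
    piKronecker_diagonal (R := R) (m := m) fun _ _ => 1

end PiKronecker

theorem Complex.exp_neg_I_mul_pi_mul_odd {m : ℤ} (hm : Odd m) :
    Complex.exp (-Complex.I * Real.pi * m) = -1 := by
  rw [show -Complex.I * Real.pi * m = (-m : ℤ) * (Real.pi * Complex.I) by push_cast; ring,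
    Complex.exp_int_mul, Complex.exp_pi_mul_I, hm.neg.neg_one_zpow]

section OddDiagonalizable

variable {κ : Type*} [Fintype κ] [DecidableEq κ]

def OddDiagonalizable (M : Matrix κ κ ℂ) : Prop :=
  ∃ (U : (Matrix κ κ ℂ)ˣ) (f : κ → ℤ), (∀ x, Odd (f x)) ∧
    M = (U : Matrix κ κ ℂ) * diagonal (fun x => (f x : ℂ)) * (↑U⁻¹ : Matrix κ κ ℂ)

theorem OddDiagonalizable.exp_neg_I_mul_pi_smul {M : Matrix κ κ ℂ} (h : OddDiagonalizable M) :
    NormedSpace.exp ((-Complex.I * Real.pi) • M) = -1 := by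
  obtain ⟨U, f, hf, rfl⟩ := h
  have hexp : NormedSpace.exp ((-Complex.I * Real.pi) • fun x => (f x : ℂ)) = -1 := by
    funext x
    rw [Pi.coe_exp, ← Complex.exp_eq_exp_ℂ]
    exact Complex.exp_neg_I_mul_pi_mul_odd (hf x)
  have hneg : diagonal (-1 : κ → ℂ) = -1 :=
    (diagonal_neg 1).symm.trans (congrArg Neg.neg diagonal_one')
  rw [← smul_mul_assoc, ← mul_smul_comm, ← diagonal_smul, exp_units_conj, exp_diagonal, hexp,
    hneg, mul_neg_one, neg_mul, Units.mul_inv]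

theorem oddDiagonalizable_one : OddDiagonalizable (1 : Matrix κ κ ℂ) :=
  ⟨1, fun _ => 1, fun _ => odd_one, by simp⟩

theorem OddDiagonalizable.kronecker {κ' : Type*} [Fintype κ'] [DecidableEq κ']
    {M : Matrix κ κ ℂ} {N : Matrix κ' κ' ℂ} (hM : OddDiagonalizable M)
    (hN : OddDiagonalizable N) : OddDiagonalizable (M ⊗ₖ N) := by
  obtain ⟨U, f, hf, rfl⟩ := hM
  obtain ⟨V, g, hg, rfl⟩ := hN
  refine ⟨⟨U ⊗ₖ V, ↑U⁻¹ ⊗ₖ ↑V⁻¹, ?_, ?_⟩, fun x => f x.1 * g x.2,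
    fun x => (hf x.1).mul (hg x.2), ?_⟩
  · simp [← mul_kronecker_mul]
  · simp [← mul_kronecker_mul]
  · simp [mul_kronecker_mul, diagonal_kronecker_diagonal]

theorem Matrix.IsHermitian.eigenvalues_eq_or_eq {M : Matrix κ κ ℂ} (hM : M.IsHermitian)
    {a b : ℂ} (hab : (M - a • 1) * (M - b • 1) = 0) (i : κ) :
    (hM.eigenvalues i : ℂ) = a ∨ (hM.eigenvalues i : ℂ) = b := by
  set v : κ → ℂ := ⇑(hM.eigenvectorBasis i)
  set μ : ℂ := (hM.eigenvalues i : ℂ)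
  have hv : v ≠ 0 := fun h =>
    hM.eigenvectorBasis.orthonormal.ne_zero i (WithLp.ofLp_injective _ h)
  have hMv : M *ᵥ v = μ • v := by
    rw [hM.mulVec_eigenvectorBasis, RCLike.real_smul_eq_coe_smul (K := ℂ)]; rfl
  have hshift : ∀ c : ℂ, (M - c • 1) *ᵥ v = (μ - c) • v := fun c => by
    rw [sub_mulVec, smul_mulVec, one_mulVec, hMv, sub_smul]
  have hroot : ((μ - a) * (μ - b)) • v = 0 := by
    rw [← zero_mulVec v, ← hab, ← mulVec_mulVec, hshift, mulVec_smul, hshift, smul_smul,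
      mul_comm]
  simpa [hv, sub_eq_zero] using hroot

theorem oddDiagonalizable_of_isHermitian {M : Matrix κ κ ℂ} (hM : M.IsHermitian) {a b : ℤ}
    (ha : Odd a) (hb : Odd b) (hab : (M - (a : ℂ) • 1) * (M - (b : ℂ) • 1) = 0) :
    OddDiagonalizable M := by
  refine ⟨Unitary.toUnits hM.eigenvectorUnitary,
    fun i => if (hM.eigenvalues i : ℂ) = a then a else b,
    fun i => by dsimp only; split_ifs <;> assumption, ?_⟩
  have hdiag : (RCLike.ofReal ∘ hM.eigenvalues : κ → ℂ)
      = fun i => ((if (hM.eigenvalues i : ℂ) = a then a else b : ℤ) : ℂ) := by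
    funext i
    split_ifs with h
    · exact h
    · exact (hM.eigenvalues_eq_or_eq hab i).resolve_left h
  conv_lhs => rw [hM.spectral_theorem, hdiag]
  rfl

theorem OddDiagonalizable.piKronecker {ι : Type*} [Fintype ι] [DecidableEq ι] {m : ι → Type*}
    [∀ i, Fintype (m i)] [∀ i, DecidableEq (m i)] {M : ∀ i, Matrix (m i) (m i) ℂ}
    (h : ∀ i, OddDiagonalizable (M i)) : OddDiagonalizable (piKronecker M) := by
  choose U f hf hM using h
  refine
    ⟨⟨Matrix.piKronecker fun i => U i, Matrix.piKronecker fun i => ↑(U i)⁻¹, ?_, ?_⟩,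
      fun u => ∏ i, f i (u i),
      fun u => Finset.prod_induction _ Odd (fun _ _ => Odd.mul) odd_one
        fun i _ => hf i (u i), ?_⟩
  · simp [piKronecker_mul, piKronecker_one]
  · simp [piKronecker_mul, piKronecker_one]
  · simp only [Units.inv_mk, Int.cast_prod]
    rw [← piKronecker_diagonal fun i x => (f i x : ℂ), piKronecker_mul, piKronecker_mul]
    exact congrArg Matrix.piKronecker (funext hM)

end OddDiagonalizable

theorem Matrix.of_one_mul_of_one {R κ : Type*} [NonAssocSemiring R] [Fintype κ] :
    (of 1 : Matrix κ κ R) * of 1 = (Fintype.card κ : R) • of 1 := by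
  ext; simp [mul_apply]

theorem oddDiagonalizable_adjMatrix_completeGraph {V : Type*} [Fintype V] [DecidableEq V]
    (h : Even (Fintype.card V)) : OddDiagonalizable ((completeGraph V).adjMatrix ℂ) := by
  have hodd : Odd ((Fintype.card V : ℤ) - 1) := ((Int.even_coe_nat _).mpr h).sub_odd odd_one
  refine oddDiagonalizable_of_isHermitian ((completeGraph V).isHermitian_adjMatrix ℂ)
    odd_neg_one hodd ?_
  rw [adjMatrix_completeGraph_eq_of_one_sub_one]
  set J : Matrix V V ℂ := of 1
  set N : ℂ := (Fintype.card V : ℂ)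
  push_cast
  calc (J - 1 - (-1 : ℂ) • 1) * (J - 1 - (N - 1) • 1)
      = J * (J - N • 1) := by congr 1 <;> module
    _ = 0 := by rw [mul_sub, mul_smul_comm, mul_one, of_one_mul_of_one, sub_self]

theorem Kadj_eq_adjMatrix_completeGraph (n : ℕ) :
    Kadj n = (completeGraph (Fin n)).adjMatrix ℂ :=
  adjMatrix_top.symm

theorem A2_eq_adjMatrix_completeGraph : A2 = (completeGraph (ZMod 2)).adjMatrix ℂ :=
  adjMatrix_top.symm

theorem stmt10_general (d r : ℕ) (n : Fin d → ℕ)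
    (heven : Even (Finset.univ.gcd n))
    (a : Fin d → ZMod 2) (y : Fin r → ZMod 2) :
    NormedSpace.exp ((-Complex.I * ((Real.pi : ℝ) : ℂ)) •
        ((compKron n a) ⊗ₖ (cube y))) = -1 := by
  have hK : ∀ i, OddDiagonalizable (Kadj (n i)) := fun i => by
    rw [Kadj_eq_adjMatrix_completeGraph]
    exact oddDiagonalizable_adjMatrix_completeGraph (by
      simpa using heven.trans_dvd (Finset.gcd_dvd (Finset.mem_univ i)))
  have hA2 : OddDiagonalizable A2 := by
    rw [A2_eq_adjMatrix_completeGraph]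
    exact oddDiagonalizable_adjMatrix_completeGraph (by decide)
  have hB₁ : OddDiagonalizable (compKron n a) :=
    OddDiagonalizable.piKronecker fun i => by
      split_ifs
      exacts [hK i, oddDiagonalizable_one]
  have hB₂ : OddDiagonalizable (cube y) :=
    OddDiagonalizable.piKronecker fun j => by
      split_ifs
      exacts [hA2, oddDiagonalizable_one]
  exact (hB₁.kronecker hB₂).exp_neg_I_mul_pi_smul

/-- for nonzero `a ∈ (ℤ/2)^d`, nonzero `y ∈ (ℤ/2)^r`, `n_i ≥ 3` with
`h = gcd(n_1,…,n_d)` even, `exp(-πi·B) = -I` for `B = M_a ⊗ M_y`. -/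
theorem stmt10 (d r : ℕ) (hd : 0 < d) (n : Fin d → ℕ) (hn : ∀ i, 3 ≤ n i)
    (heven : Even (Finset.univ.gcd n))
    (a : Fin d → ZMod 2) (ha : a ≠ 0) (y : Fin r → ZMod 2) (hy : y ≠ 0) :
    NormedSpace.exp ((-Complex.I * ((Real.pi : ℝ) : ℂ)) •
        ((compKron n a) ⊗ₖ (cube y))) = -1 :=
  stmt10_general d r n heven a y
end

section
/- Let y ∈ (ℤ/2)^r be nonzero and M_y = A_{K_2}^{y_1} ⊗ ⋯ ⊗ A_{K_2}^{y_r}. Let B = I_{N} ⊗ M_y for any N ≥ 1. Then exp(-i(π/2)B) = -i·(I_N ⊗ M_y) and exp(-iπB) = -I_{N·2^r}. Consequently, the graph with adjacency matrix B admits perfect state transfer at time π/2 and is periodic with period π. -/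
/-!
`M_y` is the permutation matrix of the translation `u ↦ u + y` of `(ℤ/2)^r`, so `M_y² = I` and
`B = I_N ⊗ M_y` is an involution. For an involution the even and odd terms of the exponential
series sum to `exp (c • B) = cosh c • I + sinh c • B`, that is `exp (-itB) = cos t • I - i sin t • B`;
at `t = π/2` and `t = π` this is `-iB` and `-I`. Since `y ≠ 0`, the entry of `-iB` at
`((x, u), (x, u + y))` is an off-diagonal entry of modulus one.
-/

open Kronecker

section Involution

variable {𝔸 : Type*} [Ring 𝔸] [Algebra ℂ 𝔸] [TopologicalSpace 𝔸] [IsTopologicalRing 𝔸]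
  [ContinuousSMul ℂ 𝔸] [T2Space 𝔸] {A : 𝔸}

theorem exp_smul_of_mul_self_eq_one (hA : A * A = 1) (c : ℂ) :
    NormedSpace.exp (c • A) = Complex.cosh c • 1 + Complex.sinh c • A := by
  have hA2 : A ^ 2 = 1 := by rw [sq, hA]
  have hterm (n : ℕ) : ((n.factorial : ℂ)⁻¹) • (c • A) ^ n = (c ^ n / n.factorial) • A ^ n := by
    rw [smul_pow, smul_smul, inv_mul_eq_div]
  rw [NormedSpace.exp_eq_tsum ℂ]
  refine HasSum.tsum_eq (HasSum.even_add_odd ?_ ?_)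
  · convert (Complex.hasSum_cosh c).smul_const (1 : 𝔸) using 1
    funext k
    rw [hterm, pow_mul A, hA2, one_pow]
  · convert (Complex.hasSum_sinh c).smul_const A using 1
    funext k
    rw [hterm, pow_succ A, pow_mul A, hA2, one_pow, one_mul]

theorem exp_neg_I_mul_smul_of_mul_self_eq_one (hA : A * A = 1) (t : ℝ) :
    NormedSpace.exp ((-Complex.I * (t : ℂ)) • A) =
      (Real.cos t : ℂ) • 1 + (-Complex.I * Real.sin t) • A := by
  rw [exp_smul_of_mul_self_eq_one hA, show -Complex.I * t = ((-t : ℝ) : ℂ) * Complex.I by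
    push_cast; ring, Complex.cosh_mul_I, Complex.sinh_mul_I]
  push_cast
  rw [Complex.cos_neg, Complex.sin_neg, neg_mul, mul_comm, neg_mul]

end Involution

theorem ite_A2_one_apply (a s t : ZMod 2) :
    (if a = 1 then A2 else 1) s t = if t = s + a then 1 else 0 := by
  have hcases : ∀ b : ZMod 2, b = 0 ∨ b = 1 := by decide
  rcases hcases a with rfl | rfl <;> rcases hcases s with rfl | rfl <;>
    rcases hcases t with rfl | rfl <;> simp +decide [A2]

theorem cube_apply {r : ℕ} (y u v : Fin r → ZMod 2) :
    cube y u v = if v = u + y then 1 else 0 := by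
  simp only [cube, Matrix.of_apply, ite_A2_one_apply, Fintype.prod_boole]
  congr 1
  simp [funext_iff]

theorem cube_mul_self {r : ℕ} (y : Fin r → ZMod 2) : cube y * cube y = 1 := by
  ext u w
  have hyy : u + y + y = u := by rw [add_assoc, ZModModule.add_self, add_zero]
  simp_rw [Matrix.mul_apply, cube_apply, boole_mul, Finset.sum_ite_eq' Finset.univ (u + y)]
  simp [hyy, Matrix.one_apply, eq_comm]

theorem stmt13_general (N r : ℕ) (y : Fin r → ZMod 2) (hy : y ≠ 0) :
    NormedSpace.exp ((-Complex.I * ((Real.pi / 2 : ℝ) : ℂ)) •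
        ((1 : Matrix (Fin N) (Fin N) ℂ) ⊗ₖ cube y)) =
      (-Complex.I) • ((1 : Matrix (Fin N) (Fin N) ℂ) ⊗ₖ cube y) ∧
    NormedSpace.exp ((-Complex.I * ((Real.pi : ℝ) : ℂ)) •
        ((1 : Matrix (Fin N) (Fin N) ℂ) ⊗ₖ cube y)) = -1 ∧
    (∀ (x : Fin N) (u : Fin r → ZMod 2),
      (x, u) ≠ (x, u + y) ∧
      ‖(NormedSpace.exp ((-Complex.I * ((Real.pi / 2 : ℝ) : ℂ)) •
        ((1 : Matrix (Fin N) (Fin N) ℂ) ⊗ₖ cube y))) (x, u) (x, u + y)‖ = 1) ∧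
    ∀ p : Fin N × (Fin r → ZMod 2),
      ‖(NormedSpace.exp ((-Complex.I * ((Real.pi : ℝ) : ℂ)) •
        ((1 : Matrix (Fin N) (Fin N) ℂ) ⊗ₖ cube y))) p p‖ = 1 := by
  have hB : ((1 : Matrix (Fin N) (Fin N) ℂ) ⊗ₖ cube y) * (1 ⊗ₖ cube y) = 1 := by
    rw [← Matrix.mul_kronecker_mul, cube_mul_self, mul_one, Matrix.one_kronecker_one]
  have hpst := exp_neg_I_mul_smul_of_mul_self_eq_one hB (Real.pi / 2)
  have hper := exp_neg_I_mul_smul_of_mul_self_eq_one hB Real.pi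
  rw [Real.cos_pi_div_two, Real.sin_pi_div_two, Complex.ofReal_zero, Complex.ofReal_one,
    zero_smul, zero_add, mul_one] at hpst
  rw [Real.cos_pi, Real.sin_pi, Complex.ofReal_zero, Complex.ofReal_neg, Complex.ofReal_one,
    neg_one_smul, mul_zero, zero_smul, add_zero] at hper
  refine ⟨hpst, hper, fun x u => ⟨?_, ?_⟩, fun p => ?_⟩
  · simpa [Prod.ext_iff] using hy
  · rw [hpst]
    simp [cube_apply]
  · rw [hper]
    simp

/-- for nonzero `y ∈ (ℤ/2)^r` and `B = I_N ⊗ M_y`,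
`exp(-i(π/2)B) = -i·B` and `exp(-iπB) = -I`; consequently the graph admits perfect
state transfer at time `π/2` and is periodic with period `π`. -/
theorem stmt13 (N r : ℕ) (hN : 1 ≤ N) (y : Fin r → ZMod 2) (hy : y ≠ 0) :
    NormedSpace.exp ((-Complex.I * ((Real.pi / 2 : ℝ) : ℂ)) •
        ((1 : Matrix (Fin N) (Fin N) ℂ) ⊗ₖ cube y)) =
      (-Complex.I) • ((1 : Matrix (Fin N) (Fin N) ℂ) ⊗ₖ cube y) ∧
    NormedSpace.exp ((-Complex.I * ((Real.pi : ℝ) : ℂ)) •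
        ((1 : Matrix (Fin N) (Fin N) ℂ) ⊗ₖ cube y)) = -1 ∧
    (∀ (x : Fin N) (u : Fin r → ZMod 2),
      (x, u) ≠ (x, u + y) ∧
      ‖(NormedSpace.exp ((-Complex.I * ((Real.pi / 2 : ℝ) : ℂ)) •
        ((1 : Matrix (Fin N) (Fin N) ℂ) ⊗ₖ cube y))) (x, u) (x, u + y)‖ = 1) ∧
    ∀ p : Fin N × (Fin r → ZMod 2),
      ‖(NormedSpace.exp ((-Complex.I * ((Real.pi : ℝ) : ℂ)) •
        ((1 : Matrix (Fin N) (Fin N) ℂ) ⊗ₖ cube y))) p p‖ = 1 :=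
  stmt13_general N r y hy
end
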